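/- arXiv:math/0703123 — 3 statements merged into one kernel-verified Lean document; each statement's English description precedes it below -/
import Mathlib

section
/- Let Q be a finite set and T_1,…,T_s : Q → ℕ. Suppose p : Q → ℝ is strictly positive and for every integer vector k : Q → ℤ satisfying ∑_{x ∈ Q} k(x)·T_j(x) = 0 for all j = 1,…,s, one has ∏_{x ∈ Q} p(x)^{k(x)⁺} = ∏_{x ∈ Q} p(x)^{k(x)⁻}. Then the function x ↦ log p(x) lies in the real linear span of {T_1,…,T_s} in ℝ^Q. Hence, for strictly positive p, the log-linear model and the implicit binomial model are equivalent. -/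
/-!
Taking logarithms turns each binomial equation into the linear equation `∑ₓ k(x) log p(x) = 0`,
so `k ↦ ∑ₓ k(x) log p(x)` is a `ℤ`-linear functional on `ℤ^Q` vanishing on the kernel of the
design matrix `ℤ^Q → ℤ^s`. It therefore factors through the image of that matrix, and since `ℝ`
is a divisible (hence injective) abelian group, the factorization extends to a `ℤ`-linear map
`ψ : ℤ^s → ℝ`. Evaluating `ψ ∘ T = ∑ₓ k(x) log p(x)` at the unit vectors of `ℤ^Q` gives
`log p = ∑ⱼ ψ(eⱼ) Tⱼ`.
-/

open Matrix

theorem Module.Baer.exists_comp_eq_of_ker_le {R D M N : Type*} [Ring R] [AddCommGroup D]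
    [Module R D] [AddCommGroup M] [Module R M] [AddCommGroup N] [Module R N]
    (hD : Module.Baer R D) (φ : M →ₗ[R] N) (f : M →ₗ[R] D)
    (hker : LinearMap.ker φ ≤ LinearMap.ker f) :
    ∃ ψ : N →ₗ[R] D, ψ ∘ₗ φ = f := by
  obtain ⟨ψ, hψ⟩ := hD.extension_property (LinearMap.range φ).subtype Subtype.val_injective
    (Submodule.liftQ _ f hker ∘ₗ φ.quotKerEquivRange.symm.toLinearMap)
  refine ⟨ψ, LinearMap.ext fun x => ?_⟩
  have := LinearMap.congr_fun hψ ⟨φ x, LinearMap.mem_range_self φ x⟩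
  simpa [LinearMap.quotKerEquivRange_symm_apply_image] using this

theorem Matrix.mem_span_range_intCast_of_forall_mulVec_eq_zero {m n : Type*} [Fintype m]
    [Fintype n] [DecidableEq m] [DecidableEq n] (A : Matrix m n ℤ) (L : n → ℝ)
    (hL : ∀ k : n → ℤ, A *ᵥ k = 0 → ∑ x, (k x : ℝ) * L x = 0) :
    L ∈ Submodule.span ℝ (Set.range fun i x => (A i x : ℝ)) := by
  obtain ⟨ψ, hψ⟩ := (Module.Baer.of_divisible ℝ).exists_comp_eq_of_ker_le A.mulVecLin
    (Fintype.linearCombination ℤ L) fun k hk => by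
      simpa [Fintype.linearCombination_apply, zsmul_eq_mul] using hL k hk
  refine (Submodule.mem_span_range_iff_exists_fun ℝ).2
    ⟨fun i => ψ (Pi.single i 1), funext fun x => ?_⟩
  have hcol : ψ (A.col x) = L x := by
    simpa only [LinearMap.coe_comp, Function.comp_apply, mulVecLin_apply, mulVec_single_one,
      Fintype.linearCombination_apply_single, one_smul] using LinearMap.congr_fun hψ (Pi.single x 1)
  rw [← hcol, pi_eq_sum_univ' (A.col x), map_sum, Finset.sum_apply]
  refine Finset.sum_congr rfl fun i _ => ?_
  rw [ψ.map_smul_of_tower]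
  simp only [Pi.smul_apply, smul_eq_mul, zsmul_eq_mul, col_apply, mul_comm]

theorem sum_mul_log_eq_zero_of_prod_pow_toNat_eq {Q : Type*} [Fintype Q] {p : Q → ℝ}
    (hp : ∀ x, p x ≠ 0) {k : Q → ℤ}
    (h : ∏ x, p x ^ (k x).toNat = ∏ x, p x ^ (-(k x)).toNat) :
    ∑ x, (k x : ℝ) * Real.log (p x) = 0 := by
  have hlog := congrArg Real.log h
  simp only [Real.log_prod fun x _ => pow_ne_zero _ (hp x), Real.log_pow] at hlog
  rw [← sub_eq_zero, ← Finset.sum_sub_distrib] at hlog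
  rw [← hlog]
  refine Finset.sum_congr rfl fun x _ => ?_
  have hk : ((k x).toNat : ℝ) - ((-(k x)).toNat : ℝ) = k x := by
    exact_mod_cast Int.toNat_sub_toNat_neg (k x)
  rw [← sub_mul, hk]

/-- If `p` is strictly positive and satisfies the implicit binomial equation
`∏ₓ p(x)^{k(x)⁺} = ∏ₓ p(x)^{k(x)⁻}` for every integer vector `k` orthogonal to all the design
functions `T_j`, then `log p` lies in the real linear span of `T₁,…,T_s`; hence for strictly
positive `p` the log-linear model and the implicit binomial model are equivalent. -/
theorem implicit_binomial_implies_loglinear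
    {Q : Type*} [Fintype Q] (s : ℕ) (T : Fin s → Q → ℕ)
    (p : Q → ℝ) (hp : ∀ x, 0 < p x)
    (hbin : ∀ k : Q → ℤ, (∀ j, ∑ x, k x * (T j x : ℤ) = 0) →
      ∏ x, p x ^ (k x).toNat = ∏ x, p x ^ (-(k x)).toNat) :
    (fun x => Real.log (p x)) ∈
      Submodule.span ℝ (Set.range fun j : Fin s => fun x : Q => (T j x : ℝ)) := by
  classical
  set A : Matrix (Fin s) Q ℤ := of fun j x => (T j x : ℤ)
  have horth : ∀ k, A *ᵥ k = 0 → ∀ j, ∑ x, k x * (T j x : ℤ) = 0 := fun k hk j => by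
    simpa only [A, mulVec, dotProduct, of_apply, mul_comm, Pi.zero_apply] using congrFun hk j
  have hspan := A.mem_span_range_intCast_of_forall_mulVec_eq_zero (fun x => Real.log (p x))
    fun k hk => sum_mul_log_eq_zero_of_prod_pow_toNat_eq (fun x => (hp x).ne') (hbin k (horth k hk))
  simpa only [A, of_apply, Int.cast_natCast] using hspan
end

section
/- Let A = ({1,2,3,4,5} × {1,2}) \ {(3,2),(4,1)} and let q : A → ℝ be strictly positive. Then there exist strictly positive reals ρ_1,…,ρ_5, ψ_1, ψ_2 with q_{ij} = ρ_i ψ_j for all (i,j) ∈ A if and only if q_{11}q_{22} − q_{21}q_{12} = 0 and q_{51}q_{22} − q_{21}q_{52} = 0. -/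
/-- On the cell set `A = ({1,…,5} × {1,2}) \ {(3,2),(4,1)}` of the 5 × 2 cancer
table with two structural zeros, a strictly positive table `q` is quasi-independent
(`q_{ij} = ρ_i ψ_j` with positive row and column parameters) iff the two binomial constraints
`q₁₁q₂₂ − q₂₁q₁₂ = 0` and `q₅₁q₂₂ − q₂₁q₅₂ = 0` hold. -/
theorem quasi_independence_iff_binomials
    (q : ℕ → ℕ → ℝ) (A : Finset (ℕ × ℕ))
    (hA : A = (({1, 2, 3, 4, 5} : Finset ℕ) ×ˢ ({1, 2} : Finset ℕ)) \ {(3, 2), (4, 1)})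
    (hq : ∀ p ∈ A, 0 < q p.1 p.2) :
    (∃ ρ ψ : ℕ → ℝ,
        (∀ i ∈ ({1, 2, 3, 4, 5} : Finset ℕ), 0 < ρ i) ∧
        (∀ j ∈ ({1, 2} : Finset ℕ), 0 < ψ j) ∧
        ∀ p ∈ A, q p.1 p.2 = ρ p.1 * ψ p.2) ↔
      (q 1 1 * q 2 2 - q 2 1 * q 1 2 = 0 ∧ q 5 1 * q 2 2 - q 2 1 * q 5 2 = 0) := by
  subst hA
  have h11 : 0 < q 1 1 := hq (1,1) (by decide)
  have h12 : 0 < q 1 2 := hq (1,2) (by decide)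
  have h21 : 0 < q 2 1 := hq (2,1) (by decide)
  have h22 : 0 < q 2 2 := hq (2,2) (by decide)
  have h31 : 0 < q 3 1 := hq (3,1) (by decide)
  have h42 : 0 < q 4 2 := hq (4,2) (by decide)
  have h51 : 0 < q 5 1 := hq (5,1) (by decide)
  have h52 : 0 < q 5 2 := hq (5,2) (by decide)
  constructor
  · rintro ⟨ρ, ψ, hρ, hψ, hfac⟩
    have e11 := hfac (1,1) (by decide)
    have e12 := hfac (1,2) (by decide)
    have e21 := hfac (2,1) (by decide)
    have e22 := hfac (2,2) (by decide)
    have e51 := hfac (5,1) (by decide)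
    have e52 := hfac (5,2) (by decide)
    simp only at e11 e12 e21 e22 e51 e52
    constructor
    · rw [e11, e12, e21, e22]; ring
    · rw [e21, e22, e51, e52]; ring
  · rintro ⟨h1, h2⟩
    refine ⟨fun i => if i = 4 then q 4 2 * q 1 1 / q 1 2 else q i 1,
      fun j => if j = 2 then q 1 2 / q 1 1 else 1, ?_, ?_, ?_⟩
    · intro i hi; fin_cases hi <;> simp <;> positivity
    · intro j hj; fin_cases hj <;> simp
      positivity
    · intro p hp
      fin_cases hp <;> simp <;> field_simp <;> nlinarith [h1, h2, h11.ne', h12.ne']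
end

section
/- Let Q be a finite set, T_1,…,T_s : Q → ℕ, and let (p_n)_{n ∈ ℕ} be a sequence of strictly positive functions p_n : Q → ℝ such that for each n the function log p_n lies in the real linear span of {T_1,…,T_s}. If p_n converges pointwise to q : Q → ℝ, then for every integer vector k : Q → ℤ with ∑_{x ∈ Q} k(x)·T_j(x) = 0 for all j, the limit satisfies ∏_{x ∈ Q} q(x)^{k(x)⁺} = ∏_{x ∈ Q} q(x)^{k(x)⁻}. That is, the implicit binomial equations are satisfied by all limits of the positive log-linear model. -/
/-!
Every positive member `p` of the model satisfies the binomial equation of `k`: taking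
logarithms turns it into `∑ₓ k x · log p x = 0`, which holds because `log p` lies in the span
of the `T_j`, all of which are orthogonal to `k`. The set of solutions of a binomial equation is closed, so it
also contains every pointwise limit of such `p`.
-/

open Filter

def binomialVariety {Q M : Type*} [Fintype Q] [CommMonoid M] (k : Q → ℤ) : Set (Q → M) :=
  {q | ∏ x, q x ^ (k x).toNat = ∏ x, q x ^ (-(k x)).toNat}

theorem isClosed_binomialVariety {Q M : Type*} [Fintype Q] [CommMonoid M] [TopologicalSpace M]
    [ContinuousMul M] [T2Space M] (k : Q → ℤ) : IsClosed (binomialVariety (M := M) k) :=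
  isClosed_eq (by fun_prop) (by fun_prop)

theorem dotProduct_eq_zero_of_mem_span {Q ι R : Type*} [Fintype Q] [CommSemiring R]
    {k : Q → R} {v : ι → Q → R} (hk : ∀ j, k ⬝ᵥ v j = 0) {f : Q → R}
    (hf : f ∈ Submodule.span R (Set.range v)) : k ⬝ᵥ f = 0 := by
  have hle : Submodule.span R (Set.range v) ≤ LinearMap.ker (dotProductBilin R R k) :=
    Submodule.span_le.mpr (Set.range_subset_iff.mpr hk)
  exact hle hf

theorem mem_binomialVariety_of_sum_mul_log_eq_zero {Q : Type*} [Fintype Q] {p : Q → ℝ}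
    (hp : ∀ x, 0 < p x) {k : Q → ℤ} (hk : ∑ x, (k x : ℝ) * Real.log (p x) = 0) :
    p ∈ binomialVariety k := by
  refine Real.log_injOn_pos (Finset.prod_pos fun x _ => pow_pos (hp x) _)
    (Finset.prod_pos fun x _ => pow_pos (hp x) _) ?_
  have hsplit : ∀ x, (k x : ℝ) = (k x).toNat - (-(k x)).toNat := fun x => by
    exact_mod_cast (Int.toNat_sub_toNat_neg (k x)).symm
  simp only [hsplit, sub_mul, Finset.sum_sub_distrib, sub_eq_zero] at hk
  simpa only [Real.log_prod fun x _ => (pow_pos (hp x) _).ne', Real.log_pow] using hk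

/-- If a sequence of strictly positive log-linear distributions (with design
functions `T₁,…,T_s`) converges pointwise to `q`, then `q` satisfies every implicit binomial
equation associated with an integer vector `k` orthogonal to all the `T_j`: the binomial
equations hold for all limits of the positive log-linear model. -/
theorem limits_of_loglinear_satisfy_implicit_binomial
    {Q : Type*} [Fintype Q] (s : ℕ) (T : Fin s → Q → ℕ)
    (p : ℕ → Q → ℝ) (hp : ∀ n x, 0 < p n x)
    (hlog : ∀ n, (fun x => Real.log (p n x)) ∈
      Submodule.span ℝ (Set.range fun j : Fin s => fun x : Q => (T j x : ℝ)))
    (q : Q → ℝ)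
    (hlim : ∀ x, Filter.Tendsto (fun n => p n x) Filter.atTop (nhds (q x)))
    (k : Q → ℤ) (hk : ∀ j, ∑ x, k x * (T j x : ℤ) = 0) :
    ∏ x, q x ^ (k x).toNat = ∏ x, q x ^ (-(k x)).toNat := by
  have hkT : ∀ j, (fun x => (k x : ℝ)) ⬝ᵥ (fun x => (T j x : ℝ)) = 0 := fun j => by
    rw [dotProduct]
    exact_mod_cast hk j
  have hmem : ∀ n, p n ∈ binomialVariety k := fun n =>
    mem_binomialVariety_of_sum_mul_log_eq_zero (hp n)
      (dotProduct_eq_zero_of_mem_span hkT (hlog n))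
  exact (isClosed_binomialVariety k).mem_of_tendsto (tendsto_pi_nhds.mpr hlim)
    (Eventually.of_forall hmem)
end
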